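/- Assume Q is negative semidefinite and k3 ≠ 0, and set δ = −(k2−Rt)/k3. Then for a vector w ∈ ℝ³, one has wᵀ·Q·w = 0 if and only if w has the form w = (α, β, δ·β) for some real numbers α and β. -/

import Mathlib

/-!
The form `xᵀQx = 2·xᵀPFx` has no `x₀²` term, so negative semidefiniteness kills its `x₀x₁` and
`x₀x₂` coefficients and forces the discriminant of the remaining binary form in `(x₁, x₂)` to be
nonpositive. Since `(k2 − Rt)/Lt = −δ·k3/Lt`, that discriminant is `(k3/Lt)²(p22 + δ p23)²`, so
`p22 = −δ p23` and the form collapses to `(2 k3 p23 / Lt)(x₂ − δ x₁)²`. Its coefficient is nonzero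
because `p22 > 0` by positive definiteness of `P`.
-/

open Matrix

theorem Matrix.IsSymm.dotProduct_mulVec_transpose_mul_add_mul {n R : Type*} [Fintype n]
    [CommSemiring R] {P : Matrix n n R} (hP : P.IsSymm) (F : Matrix n n R) (x : n → R) :
    x ⬝ᵥ (Fᵀ * P + P * F) *ᵥ x = 2 * (x ⬝ᵥ (P * F) *ᵥ x) := by
  have hPx : P *ᵥ x = x ᵥ* P := by rw [← vecMul_transpose, hP.eq]
  rw [add_mulVec, dotProduct_add, ← mulVec_mulVec, ← mulVec_mulVec, dotProduct_mulVec x Fᵀ,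
    vecMul_transpose, dotProduct_comm, hPx, ← dotProduct_mulVec]
  ring

lemma eq_zero_of_forall_mul_add_nonpos {u c : ℝ} (h : ∀ t : ℝ, u * t + c ≤ 0) : u = 0 := by
  have := discrim_le_zero_of_nonpos (a := (0 : ℝ)) (b := u) (c := c) fun t => by simpa using h t
  simp only [discrim, mul_zero, zero_mul, sub_zero] at this
  exact pow_eq_zero_iff two_ne_zero |>.1 (le_antisymm this (sq_nonneg u))

lemma coeffs_of_forall_ternary_nonpos {u v A B C : ℝ}
    (h : ∀ x y z : ℝ, u * x * y + v * x * z + A * y ^ 2 + B * y * z + C * z ^ 2 ≤ 0) :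
    u = 0 ∧ v = 0 ∧ discrim A B C ≤ 0 ∧ C ≤ 0 := by
  refine ⟨eq_zero_of_forall_mul_add_nonpos (c := A) fun t => ?_,
    eq_zero_of_forall_mul_add_nonpos (c := C) fun t => ?_,
    discrim_le_zero_of_nonpos fun t => ?_, ?_⟩
  · simpa using h t 1 0
  · simpa using h t 0 1
  · simpa [sq, mul_comm] using h 0 t 1
  · simpa using h 0 0 1

lemma dotProduct_mulVec_structured_mul (η p22 p23 p33 e c a b : ℝ) (x : Fin 3 → ℝ) :
    x ⬝ᵥ (!![η, 0, 0; 0, p22, p23; 0, p23, p33] * !![0, e, 0; c, a, b; -1, 0, 0]) *ᵥ x =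
      (η * e + p22 * c - p23) * x 0 * x 1 + (p23 * c - p33) * x 0 * x 2 + a * p22 * x 1 ^ 2
        + (b * p22 + a * p23) * x 1 * x 2 + b * p23 * x 2 ^ 2 := by
  simp [mulVec, dotProduct, Fin.sum_univ_three, Matrix.mul_apply]
  ring

lemma quadratic_eq_zero_iff_of_forall_nonpos {u v a b p22 p23 δ : ℝ} (hb : b ≠ 0)
    (hp22 : 0 < p22) (ha : a = -δ * b)
    (h : ∀ x y z : ℝ,
      u * x * y + v * x * z + a * p22 * y ^ 2 + (b * p22 + a * p23) * y * z + b * p23 * z ^ 2 ≤ 0)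
    (x y z : ℝ) :
    u * x * y + v * x * z + a * p22 * y ^ 2 + (b * p22 + a * p23) * y * z + b * p23 * z ^ 2 = 0 ↔
      z = δ * y := by
  obtain ⟨rfl, rfl, hdisc, hC⟩ := coeffs_of_forall_ternary_nonpos h
  subst ha
  have hdisc_eq : discrim (-δ * b * p22) (b * p22 + -δ * b * p23) (b * p23) =
      (b * (p22 + δ * p23)) ^ 2 := by
    unfold discrim; ring
  have hp22_eq : p22 = -δ * p23 := by
    rw [hdisc_eq] at hdisc
    have hprod := pow_eq_zero_iff two_ne_zero |>.1 (le_antisymm hdisc (sq_nonneg _))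
    linarith [(mul_eq_zero.1 hprod).resolve_left hb]
  have hp23 : p23 ≠ 0 := by
    rintro rfl
    simp at hp22_eq
    linarith
  have hC_neg : b * p23 < 0 := hC.lt_of_ne (mul_ne_zero hb hp23)
  have hsquare : 0 * x * y + 0 * x * z + -δ * b * p22 * y ^ 2 + (b * p22 + -δ * b * p23) * y * z
      + b * p23 * z ^ 2 = b * p23 * (z - δ * y) ^ 2 := by
    rw [hp22_eq]; ring
  rw [hsquare, mul_eq_zero, or_iff_right hC_neg.ne, pow_eq_zero_iff two_ne_zero, sub_eq_zero]

lemma exists_eq_vec3_iff (δ : ℝ) (w : Fin 3 → ℝ) :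
    (∃ α β : ℝ, w = ![α, β, δ * β]) ↔ w 2 = δ * w 1 := by
  constructor
  · rintro ⟨α, β, rfl⟩
    rfl
  · intro h
    exact ⟨w 0, w 1, by ext i; fin_cases i <;> simp [h]⟩

theorem quadratic_zero_iff_structured_general
    (Rt Lt Ct : ℝ) (hLt : 0 < Lt)
    (k1 k2 k3 : ℝ) (η p22 p23 p33 : ℝ)
    (F P : Matrix (Fin 3) (Fin 3) ℝ)
    (hF : F = !![0, 1/Ct, 0; (k1 - 1)/Lt, (k2 - Rt)/Lt, k3/Lt; -1, 0, 0])
    (hP : P = !![η, 0, 0; 0, p22, p23; 0, p23, p33])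
    (hPpd : P.PosDef)
    (Q : Matrix (Fin 3) (Fin 3) ℝ) (hQ : Q = Fᵀ * P + P * F)
    (hns : ∀ x : Fin 3 → ℝ, x ⬝ᵥ Q.mulVec x ≤ 0)
    (hk3 : k3 ≠ 0)
    (δ : ℝ) (hδ : δ = -(k2 - Rt)/k3) :
    ∀ w : Fin 3 → ℝ, w ⬝ᵥ Q.mulVec w = 0 ↔ ∃ α β : ℝ, w = ![α, β, δ * β] := by
  have hform (x : Fin 3 → ℝ) : x ⬝ᵥ Q *ᵥ x = 2 * (x ⬝ᵥ (P * F) *ᵥ x) := by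
    rw [hQ, (isHermitian_iff_isSymm.1 hPpd.isHermitian).dotProduct_mulVec_transpose_mul_add_mul]
  have hp22 : 0 < p22 := by simpa [hP] using hPpd.diag_pos (i := 1)
  have ha : (k2 - Rt) / Lt = -δ * (k3 / Lt) := by rw [hδ]; field_simp
  have hPF_nonpos (x : Fin 3 → ℝ) : x ⬝ᵥ (P * F) *ᵥ x ≤ 0 := by linarith [hns x, hform x]
  intro w
  rw [hform, mul_eq_zero, or_iff_right two_ne_zero, hP, hF, dotProduct_mulVec_structured_mul,
    quadratic_eq_zero_iff_of_forall_nonpos (div_ne_zero hk3 hLt.ne') hp22 ha, exists_eq_vec3_iff]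
  intro x y z
  have h := hPF_nonpos ![x, y, z]
  rw [hP, hF, dotProduct_mulVec_structured_mul] at h
  simpa using h

/-- If `Q = Fᵀ·P + P·F` is negative semidefinite and `k3 ≠ 0`, then, with
`δ = −(k2−Rt)/k3`, a vector `w ∈ ℝ³` satisfies `wᵀ·Q·w = 0` if and only if
`w = (α, β, δ·β)` for some reals `α, β`. -/
theorem quadratic_zero_iff_structured
    (Rt Lt Ct : ℝ) (hRt : 0 < Rt) (hLt : 0 < Lt) (hCt : 0 < Ct)
    (k1 k2 k3 : ℝ) (η p22 p23 p33 : ℝ) (hη : 0 < η)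
    (F P : Matrix (Fin 3) (Fin 3) ℝ)
    (hF : F = !![0, 1/Ct, 0; (k1 - 1)/Lt, (k2 - Rt)/Lt, k3/Lt; -1, 0, 0])
    (hP : P = !![η, 0, 0; 0, p22, p23; 0, p23, p33])
    (hPpd : P.PosDef)
    (Q : Matrix (Fin 3) (Fin 3) ℝ) (hQ : Q = Fᵀ * P + P * F)
    (hns : ∀ x : Fin 3 → ℝ, x ⬝ᵥ Q.mulVec x ≤ 0)
    (hk3 : k3 ≠ 0)
    (δ : ℝ) (hδ : δ = -(k2 - Rt)/k3) :
    ∀ w : Fin 3 → ℝ, w ⬝ᵥ Q.mulVec w = 0 ↔ ∃ α β : ℝ, w = ![α, β, δ * β] :=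
  quadratic_zero_iff_structured_general Rt Lt Ct hLt k1 k2 k3 η p22 p23 p33 F P hF hP hPpd Q hQ hns
    hk3 δ hδ
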